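/- arXiv:1801.00761 — 5 statements merged into one kernel-verified Lean document; each statement's English description precedes it below -/
import Mathlib

section
/- Let $\varphi:[0,\infty)\to(0,\infty)$ be strictly increasing, convex, $C^2$ on $(0,\infty)$, with $L_\varphi = \lim_{u\to\infty} u\varphi'(u)/\varphi(u)$ existing in $[1,\infty]$. Then for any $c>0$, $\beta>0$ and any $B$ with $0 < B < \beta L_\varphi$, there exists a constant $C \geq 0$ such that $\varphi'(u)(c\sqrt{u} - \beta u) + B\varphi(u) \leq C$ for all $u \in (0,\infty)$. -/
open Filter Set Real

/-- If `φ : [0,∞) → (0,∞)` is strictly increasing, convex, `C²` on `(0,∞)`, with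
`L_φ = lim_{u→∞} u φ'(u)/φ(u)` existing in `[1,∞]`, then for any `c > 0`, `β > 0` and
`0 < B < β L_φ` there is a constant `C ≥ 0` such that
`φ'(u)(c√u - βu) + Bφ(u) ≤ C` for all `u ∈ (0,∞)`. -/
theorem exists_bound_of_phi_class
    (φ : ℝ → ℝ)
    (hcont : ContinuousOn φ (Ici 0))
    (hpos : ∀ u ∈ Ici (0:ℝ), 0 < φ u)
    (hmono : StrictMonoOn φ (Ici 0))
    (hconv : ConvexOn ℝ (Ici 0) φ)
    (hC2 : ContDiffOn ℝ 2 φ (Ioi 0))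
    (c β B : ℝ) (hc : 0 < c) (hβ : 0 < β) (hB : 0 < B)
    (hlim : (∃ L : ℝ, 1 ≤ L ∧ B < β * L ∧
        Tendsto (fun u => u * deriv φ u / φ u) atTop (nhds L)) ∨
      Tendsto (fun u => u * deriv φ u / φ u) atTop atTop) :
    ∃ C : ℝ, 0 ≤ C ∧ ∀ u ∈ Ioi (0:ℝ),
      deriv φ u * (c * Real.sqrt u - β * u) + B * φ u ≤ C := by
  -- differentiability on `Ioi 0`
  have hdiff : ∀ u ∈ Ioi (0:ℝ), DifferentiableAt ℝ φ u := by
    intro u hu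
    have := (hC2.differentiableOn two_ne_zero).differentiableAt
      (isOpen_Ioi.mem_nhds hu)
    exact this
  have hconv' : ConvexOn ℝ (Ioi 0) φ := hconv.subset Ioi_subset_Ici_self (convex_Ioi 0)
  -- derivative is monotone on `Ioi 0`
  have hdm : MonotoneOn (deriv φ) (Ioi 0) := hconv'.monotoneOn_deriv hdiff
  -- derivative is nonnegative on `Ioi 0`
  have hd0 : ∀ u ∈ Ioi (0:ℝ), 0 ≤ deriv φ u := by
    intro u hu
    have h2 : u / 2 ∈ Ioi (0:ℝ) := by simpa using half_pos (mem_Ioi.1 hu)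
    have hslope : (0:ℝ) ≤ slope φ (u/2) u := by
      rw [slope_def_field]
      apply div_nonneg
      · have := hmono (mem_Ici.2 (le_of_lt (mem_Ioi.1 h2))) (mem_Ici.2 (le_of_lt (mem_Ioi.1 hu))) (by linarith [half_pos (mem_Ioi.1 hu)] : u/2 < u)
        linarith
      · linarith [half_pos (mem_Ioi.1 hu)]
    exact hslope.trans (hconv'.slope_le_deriv h2 hu (by linarith [half_pos (mem_Ioi.1 hu)]) (hdiff u hu))
  -- choose `r > B/β` with eventually `r ≤ u φ'(u)/φ(u)`
  obtain ⟨r, hr, hev⟩ : ∃ r : ℝ, B / β < r ∧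
      ∀ᶠ u in atTop, r ≤ u * deriv φ u / φ u := by
    rcases hlim with ⟨L, _, hBL, hL⟩ | hL
    · refine ⟨(B / β + L) / 2, by nlinarith [(div_lt_iff₀ hβ).2 (by linarith : B < L * β)], ?_⟩
      have hlt : (B / β + L) / 2 < L := by
        have : B / β < L := (div_lt_iff₀ hβ).2 (by linarith)
        linarith
      exact (hL.eventually (eventually_ge_nhds hlt)).mono fun u h => h
    · exact ⟨B / β + 1, by linarith, hL.eventually_ge_atTop _⟩
  have hrpos : 0 < r := lt_trans (div_pos hB hβ) hr
  obtain ⟨δ, hδdef⟩ : ∃ δ : ℝ, δ = β - B / r := ⟨_, rfl⟩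
  have hδ : 0 < δ := by
    rw [hδdef]
    have : B / r < β := by
      rw [div_lt_iff₀ hrpos]
      calc B = (B / β) * β := by field_simp
      _ < r * β := by nlinarith
      _ = β * r := by ring
    linarith
  -- get threshold M
  obtain ⟨M₀, hM₀⟩ := eventually_atTop.1 hev
  set M : ℝ := max M₀ (max 1 ((c / δ)^2)) with hMdef
  have hM1 : (1:ℝ) ≤ M := le_trans (le_max_left _ _) (le_max_right _ _)
  have hMpos : (0:ℝ) < M := lt_of_lt_of_le one_pos hM1
  have hMIoi : M ∈ Ioi (0:ℝ) := hMpos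
  -- the constant
  refine ⟨deriv φ M * (c * Real.sqrt M) + B * φ M, ?_, ?_⟩
  · have := hd0 M hMIoi
    have := hpos M (le_of_lt hMpos)
    positivity
  intro u hu
  have hu0 : (0:ℝ) < u := hu
  rcases le_or_gt u M with hle | hgt
  · -- small u: bound each term
    have h1 : deriv φ u * (c * Real.sqrt u - β * u) ≤ deriv φ M * (c * Real.sqrt M) := by
      rcases le_or_gt (c * Real.sqrt u - β * u) 0 with h | h
      · have h5 := mul_nonpos_of_nonneg_of_nonpos (hd0 u hu) h
        have hM0 := hd0 M hMIoi
        have h6 : 0 ≤ deriv φ M * (c * Real.sqrt M) :=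
          mul_nonneg hM0 (mul_nonneg hc.le (Real.sqrt_nonneg M))
        linarith
      · have hdle : deriv φ u ≤ deriv φ M := hdm hu hMIoi hle
        have hsle : c * Real.sqrt u - β * u ≤ c * Real.sqrt M := by
          have : Real.sqrt u ≤ Real.sqrt M := Real.sqrt_le_sqrt hle
          nlinarith
        have := hd0 u hu
        nlinarith
    have h2 : φ u ≤ φ M := by
      rcases eq_or_lt_of_le hle with rfl | h
      · exact le_rfl
      · exact le_of_lt (hmono (le_of_lt hu0) (le_of_lt hMpos) h)
    have h3 : B * φ u ≤ B * φ M := mul_le_mul_of_nonneg_left h2 hB.le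
    linarith
  · -- large u: expression ≤ 0
    have hφpos : 0 < φ u := hpos u (le_of_lt hu0)
    have hru : r ≤ u * deriv φ u / φ u :=
      hM₀ u (le_trans (le_max_left _ _) (le_of_lt hgt))
    have hkey : r * φ u ≤ u * deriv φ u := by
      have := (le_div_iff₀ hφpos).1 hru
      linarith
    -- c √u ≤ δ u
    have hsq : c / δ ≤ Real.sqrt u := by
      have h1 : (c/δ)^2 ≤ u := le_of_lt (lt_of_le_of_lt
        (le_trans (le_max_right _ _) (le_max_right _ _)) hgt)
      have := Real.sqrt_le_sqrt h1
      rwa [Real.sqrt_sq (le_of_lt (div_pos hc hδ))] at this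
    have hcs : c * Real.sqrt u ≤ δ * u := by
      have hsu : Real.sqrt u * Real.sqrt u = u := Real.mul_self_sqrt (le_of_lt hu0)
      have h1 : c ≤ δ * Real.sqrt u := by
        rw [div_le_iff₀ hδ] at hsq; linarith [hsq]
      calc c * Real.sqrt u ≤ (δ * Real.sqrt u) * Real.sqrt u :=
            mul_le_mul_of_nonneg_right h1 (Real.sqrt_nonneg u)
        _ = δ * u := by rw [mul_assoc, hsu]
    -- combine
    have hBr : B * φ u ≤ (B / r) * (u * deriv φ u) := by
      have : B / r * (r * φ u) ≤ B / r * (u * deriv φ u) :=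
        mul_le_mul_of_nonneg_left hkey (le_of_lt (div_pos hB hrpos))
      calc B * φ u = B / r * (r * φ u) := by field_simp
        _ ≤ _ := this
    have hd := hd0 u hu
    have hstep : deriv φ u * (c * Real.sqrt u - β * u) + B * φ u
        ≤ deriv φ u * (δ * u - β * u) + (B / r) * (u * deriv φ u) :=
      add_le_add (mul_le_mul_of_nonneg_left (sub_le_sub_right hcs (β*u)) hd) hBr
    have hzero : deriv φ u * (δ * u - β * u) + (B / r) * (u * deriv φ u) = 0 := by
      rw [hδdef]; ring
    have hM0 := hd0 M hMIoi
    have hφM := hpos M (le_of_lt hMpos)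
    have h6 : 0 ≤ deriv φ M * (c * Real.sqrt M) :=
      mul_nonneg hM0 (mul_nonneg hc.le (Real.sqrt_nonneg M))
    have h7 : 0 < B * φ M := mul_pos hB hφM
    linarith
end

section
/- Let $\varphi:[0,\infty)\to(0,\infty)$ be strictly increasing, convex and $C^2$ on $(0,\infty)$, and let $c>0$, $\beta>0$. Then the function $f(u) = \varphi'(u)(c\sqrt{u} - \beta u) + \tfrac{\beta}{2}\varphi(u)$ attains its maximum on $[0,\infty)$ at $u_0 = c^2/\beta^2$, and this maximum equals $\tfrac{\beta}{2}\varphi(c^2/\beta^2)$. -/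
open Filter Set Real Topology

private lemma aux_deriv_nonneg {g : ℝ → ℝ} {x d : ℝ} (hx : 0 < x)
    (hm : MonotoneOn g (Ioi 0)) (hd : HasDerivAt g d x) : 0 ≤ d := by
  have h1 : Tendsto (slope g x) (𝓝[>] x) (𝓝 d) :=
    (hasDerivAt_iff_tendsto_slope.mp hd).mono_left
      (nhdsWithin_mono x fun y hy => ne_of_gt hy)
  refine ge_of_tendsto h1 ?_
  filter_upwards [self_mem_nhdsWithin] with y hy
  rw [slope_def_field]
  exact div_nonneg (sub_nonneg.mpr (hm hx (hx.trans hy) hy.le))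
    (sub_nonneg.mpr hy.le)

/-- For `φ : [0,∞) → (0,∞)` strictly increasing, convex, `C²` on `(0,∞)` and `c, β > 0`,
the function `f(u) = φ'(u)(c√u - βu) + (β/2)φ(u)` attains its maximum on `[0,∞)` at
`u₀ = c²/β²`, with maximum value `(β/2) φ(c²/β²)`; moreover `f` is nondecreasing on
`[0, u₀]` and nonincreasing on `[u₀, ∞)`. -/
theorem max_of_f_at_c_sq_div_beta_sq
    (φ : ℝ → ℝ)
    (hcont : ContinuousOn φ (Ici 0))
    (hpos : ∀ u ∈ Ici (0:ℝ), 0 < φ u)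
    (hmono : StrictMonoOn φ (Ici 0))
    (hconv : ConvexOn ℝ (Ici 0) φ)
    (hC2 : ContDiffOn ℝ 2 φ (Ioi 0))
    (c β : ℝ) (hc : 0 < c) (hβ : 0 < β)
    (f : ℝ → ℝ)
    (hf : ∀ u, f u = deriv φ u * (c * Real.sqrt u - β * u) + (β / 2) * φ u) :
    (∀ u ∈ Ici (0:ℝ), f u ≤ (β / 2) * φ (c ^ 2 / β ^ 2)) ∧
    f (c ^ 2 / β ^ 2) = (β / 2) * φ (c ^ 2 / β ^ 2) ∧
    MonotoneOn f (Icc 0 (c ^ 2 / β ^ 2)) ∧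
    AntitoneOn f (Ici (c ^ 2 / β ^ 2)) := by
  set u₀ : ℝ := c ^ 2 / β ^ 2 with hu₀def
  have hu₀ : 0 < u₀ := by positivity
  have hsu₀ : Real.sqrt u₀ = c / β := by
    rw [show u₀ = (c / β) ^ 2 by rw [hu₀def]; ring, Real.sqrt_sq (div_pos hc hβ).le]
  have hkey : c * Real.sqrt u₀ - β * u₀ = 0 := by
    rw [hsu₀, hu₀def]; field_simp; ring
  -- value at u₀
  have hval : f u₀ = (β / 2) * φ u₀ := by rw [hf, hkey, mul_zero, zero_add]
  -- derivatives of φ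
  have hφd : ∀ x ∈ Ioi (0:ℝ), HasDerivAt φ (deriv φ x) x := fun x hx =>
    ((hC2.differentiableOn (by norm_num)).differentiableAt
      (isOpen_Ioi.mem_nhds hx)).hasDerivAt
  have hC1' : ContDiffOn ℝ 1 (deriv φ) (Ioi 0) := by
    exact hC2.deriv_of_isOpen (m := 1) isOpen_Ioi (by norm_num)
  have hφ'd : ∀ x ∈ Ioi (0:ℝ), HasDerivAt (deriv φ) (deriv (deriv φ) x) x := fun x hx =>
    ((hC1'.differentiableOn one_ne_zero).differentiableAt (isOpen_Ioi.mem_nhds hx)).hasDerivAt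
  have hφmono : MonotoneOn φ (Ioi 0) :=
    (hmono.monotoneOn).mono Ioi_subset_Ici_self
  have hφ'nonneg : ∀ x ∈ Ioi (0:ℝ), 0 ≤ deriv φ x := fun x hx =>
    aux_deriv_nonneg hx hφmono (hφd x hx)
  have hφ'mono : MonotoneOn (deriv φ) (Ioi 0) :=
    (hconv.subset Ioi_subset_Ici_self (convex_Ioi 0)).monotoneOn_deriv
      (fun x hx => ((hC2.differentiableOn (by norm_num)).differentiableAt
        (isOpen_Ioi.mem_nhds hx)))
  have hφ''nonneg : ∀ x ∈ Ioi (0:ℝ), 0 ≤ deriv (deriv φ) x := fun x hx =>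
    aux_deriv_nonneg hx hφ'mono (hφ'd x hx)
  have hfe : f = fun u => deriv φ u * (c * Real.sqrt u - β * u) + (β / 2) * φ u :=
    funext hf
  -- derivative of f
  set F' : ℝ → ℝ := fun x => (c - β * Real.sqrt x) *
    (deriv (deriv φ) x * Real.sqrt x + deriv φ x / (2 * Real.sqrt x)) with hF'def
  have hfd : ∀ x ∈ Ioi (0:ℝ), HasDerivAt f (F' x) x := by
    intro x hx
    have hsx : (0:ℝ) < Real.sqrt x := Real.sqrt_pos.mpr hx
    have hxx : Real.sqrt x * Real.sqrt x = x := Real.mul_self_sqrt hx.le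
    have h1 : HasDerivAt (fun u => c * Real.sqrt u - β * u)
        (c * (1 / (2 * Real.sqrt x)) - β * 1) x :=
      ((Real.hasDerivAt_sqrt (ne_of_gt hx)).const_mul c).sub
        ((hasDerivAt_id x).const_mul β)
    have h2 := ((hφ'd x hx).mul h1).add ((hφd x hx).const_mul (β / 2))
    rw [hfe]
    have heq : F' x = deriv (deriv φ) x * (c * Real.sqrt x - β * x) +
        deriv φ x * (c * (1 / (2 * Real.sqrt x)) - β * 1) + β / 2 * deriv φ x := by
      rw [hF'def]
      obtain ⟨s, hs, rfl⟩ : ∃ s, 0 < s ∧ s * s = x := ⟨_, hsx, hxx⟩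
      simp only [Real.sqrt_mul_self hs.le]
      field_simp
      ring
    rw [heq]
    exact h2
  have hfcont : ContinuousOn f (Ioi 0) := by
    rw [hfe]
    exact ((hC2.continuousOn_deriv_of_isOpen isOpen_Ioi (by norm_num)).mul
      (((continuous_const.mul Real.continuous_sqrt).sub
        (continuous_const.mul continuous_id)).continuousOn)).add
      (continuousOn_const.mul (hcont.mono Ioi_subset_Ici_self))
  -- sign of F'
  have hsign_pos : ∀ x ∈ Ioo (0:ℝ) u₀, 0 ≤ F' x := by
    intro x hx
    have hsx : (0:ℝ) < Real.sqrt x := Real.sqrt_pos.mpr hx.1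
    have h1 : Real.sqrt x < c / β := by
      rw [← hsu₀]; exact Real.sqrt_lt_sqrt hx.1.le hx.2
    have h2 : 0 ≤ c - β * Real.sqrt x := by
      have h3 : β * Real.sqrt x ≤ β * (c / β) := mul_le_mul_of_nonneg_left h1.le hβ.le
      have h4 : β * (c / β) = c := by field_simp
      linarith
    exact mul_nonneg h2 (add_nonneg (mul_nonneg (hφ''nonneg x hx.1) hsx.le)
      (div_nonneg (hφ'nonneg x hx.1) (by positivity)))
  have hsign_neg : ∀ x ∈ Ioi u₀, F' x ≤ 0 := by
    intro x hx
    have hx0 : (0:ℝ) < x := hu₀.trans hx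
    have hsx : (0:ℝ) < Real.sqrt x := Real.sqrt_pos.mpr hx0
    have h1 : c / β < Real.sqrt x := by
      rw [← hsu₀]; exact Real.sqrt_lt_sqrt hu₀.le hx
    have h2 : c - β * Real.sqrt x ≤ 0 := by
      have h3 : β * (c / β) ≤ β * Real.sqrt x := mul_le_mul_of_nonneg_left h1.le hβ.le
      have h4 : β * (c / β) = c := by field_simp
      linarith
    exact mul_nonpos_of_nonpos_of_nonneg h2
      (add_nonneg (mul_nonneg (hφ''nonneg x hx0) hsx.le)
        (div_nonneg (hφ'nonneg x hx0) (by positivity)))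
  -- monotone on Ioc 0 u₀
  have M1 : MonotoneOn f (Ioc 0 u₀) := by
    apply monotoneOn_of_deriv_nonneg (convex_Ioc 0 u₀)
      (hfcont.mono Ioc_subset_Ioi_self)
    · intro x hx
      rw [interior_Ioc] at hx
      exact ((hfd x hx.1).differentiableAt).differentiableWithinAt
    · intro x hx
      rw [interior_Ioc] at hx
      rw [(hfd x hx.1).deriv]
      exact hsign_pos x hx
  -- f 0 and lower bound of f on Ioc
  have hf0 : f 0 = (β / 2) * φ 0 := by
    rw [hf, Real.sqrt_zero, mul_zero, mul_zero, sub_zero, mul_zero, zero_add]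
  have hflb : ∀ b ∈ Ioc (0:ℝ) u₀, f 0 ≤ f b := by
    intro b hb
    have hb0 := hb.1
    have hsb : Real.sqrt b ≤ c / β := by
      rw [← hsu₀]; exact Real.sqrt_le_sqrt hb.2
    have hb2 : β * Real.sqrt b ≤ c := by
      have h5 := mul_le_mul_of_nonneg_left hsb hβ.le
      have h4 : β * (c / β) = c := by field_simp
      linarith
    have h1 : 0 ≤ c * Real.sqrt b - β * b := by
      nlinarith [Real.sqrt_nonneg b, Real.mul_self_sqrt hb0.le, hb2]
    have h2 : 0 ≤ deriv φ b * (c * Real.sqrt b - β * b) :=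
      mul_nonneg (hφ'nonneg b hb0) h1
    have h3 : φ 0 ≤ φ b := (hmono self_mem_Ici (le_of_lt hb0) hb0).le
    rw [hf0, hf b]
    nlinarith
  have M : MonotoneOn f (Icc 0 u₀) := by
    intro a ha b hb hab
    rcases eq_or_lt_of_le ha.1 with h0 | h0
    · rcases eq_or_lt_of_le (h0 ▸ hab : (0:ℝ) ≤ b) with hb0 | hb0
      · rw [← h0, ← hb0]
      · rw [← h0]; exact hflb b ⟨hb0, hb.2⟩
    · exact M1 ⟨h0, ha.2⟩ ⟨h0.trans_le hab, hb.2⟩ hab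
  have A : AntitoneOn f (Ici u₀) := by
    apply antitoneOn_of_deriv_nonpos (convex_Ici u₀)
      (hfcont.mono (fun x hx => lt_of_lt_of_le hu₀ hx))
    · intro x hx
      rw [interior_Ici] at hx
      exact ((hfd x (hu₀.trans hx)).differentiableAt).differentiableWithinAt
    · intro x hx
      rw [interior_Ici] at hx
      rw [(hfd x (hu₀.trans hx)).deriv]
      exact hsign_neg x hx
  refine ⟨?_, hval, M, A⟩
  intro u hu
  rcases le_total u u₀ with h | h
  · calc f u ≤ f u₀ := M ⟨hu, h⟩ ⟨hu₀.le, le_rfl⟩ h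
      _ = (β / 2) * φ u₀ := hval
  · calc f u ≤ f u₀ := A self_mem_Ici h h
      _ = (β / 2) * φ u₀ := hval
end

section
/- For $\varphi(u) = u\ln(u+1)$ and constants $c > 0$, $\beta > 0$, $0 < B < \beta$, the function $f(u) = \ln(u+1)(c\sqrt{u} - (\beta - B)u) + \frac{u}{u+1}(c\sqrt{u} - \beta u)$ satisfies $f(u) \leq \frac{c^2}{4}\left(\frac{c^2}{(\beta-B)^3} + \frac{1}{\beta}\right)$ for all $u \in (0,\infty)$. -/
open Set Real

/-- For `φ(u) = u ln(u+1)` and `c > 0`, `0 < B < β`, the function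
`f(u) = ln(u+1)(c√u - (β-B)u) + (u/(u+1))(c√u - βu)` satisfies
`f(u) ≤ (c²/4)(c²/(β-B)³ + 1/β)` for all `u ∈ (0,∞)`. -/
theorem bound_of_log_example
    (c β B : ℝ) (hc : 0 < c) (hβ : 0 < β) (hB : 0 < B) (hBβ : B < β)
    (f : ℝ → ℝ)
    (hf : ∀ u, f u = Real.log (u + 1) * (c * Real.sqrt u - (β - B) * u)
        + u / (u + 1) * (c * Real.sqrt u - β * u)) :
    ∀ u ∈ Ioi (0:ℝ), f u ≤ c ^ 2 / 4 * (c ^ 2 / (β - B) ^ 3 + 1 / β) := by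
  intro u hu
  have hu0 : (0:ℝ) < u := hu
  rw [hf]
  set s := Real.sqrt u with hsdef
  have hs0 : 0 ≤ s := Real.sqrt_nonneg u
  have hsq : s ^ 2 = u := Real.sq_sqrt hu0.le
  have hγ : 0 < β - B := by linarith
  have hlog1 : Real.log (u + 1) ≤ u := by
    have := Real.log_le_sub_one_of_pos (show 0 < u + 1 by linarith)
    linarith
  have hlog0 : 0 ≤ Real.log (u + 1) := Real.log_nonneg (by linarith)
  have h1 : Real.log (u + 1) * (c * s - (β - B) * u) ≤ c ^ 2 / 4 * (c ^ 2 / (β - B) ^ 3) := by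
    have hpos : 0 ≤ c ^ 2 / 4 * (c ^ 2 / (β - B) ^ 3) := by positivity
    rcases le_or_gt (c * s - (β - B) * u) 0 with h | h
    · have := mul_nonpos_of_nonneg_of_nonpos hlog0 h
      linarith
    · have h2 : Real.log (u + 1) * (c * s - (β - B) * u) ≤ u * (c * s - (β - B) * u) :=
        mul_le_mul_of_nonneg_right hlog1 h.le
      have key : u * (c * s - (β - B) * u) ≤ c ^ 2 / 4 * (c ^ 2 / (β - B) ^ 3) := by
        have heq : c ^ 2 / 4 * (c ^ 2 / (β - B) ^ 3) = c ^ 4 / (4 * (β - B) ^ 3) := by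
          field_simp
        rw [heq, ← hsq, le_div_iff₀ (by positivity)]
        nlinarith [sq_nonneg ((β - B) * s - c), sq_nonneg ((β - B) * s + c),
          mul_nonneg hγ.le hs0, sq_nonneg (((β - B) * s) ^ 2), sq_nonneg s,
          mul_nonneg (mul_nonneg hγ.le hγ.le) (mul_nonneg hs0 hs0)]
      linarith
  have h2 : u / (u + 1) * (c * s - β * u) ≤ c ^ 2 / 4 * (1 / β) := by
    have hpos : 0 ≤ c ^ 2 / 4 * (1 / β) := by positivity
    have hfrac0 : 0 ≤ u / (u + 1) := by positivity
    have hfrac1 : u / (u + 1) ≤ 1 := by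
      rw [div_le_one (by linarith)]; linarith
    rcases le_or_gt (c * s - β * u) 0 with h | h
    · have := mul_nonpos_of_nonneg_of_nonpos hfrac0 h
      linarith
    · have hle : u / (u + 1) * (c * s - β * u) ≤ c * s - β * u := by
        nlinarith
      have hcs : c * s - β * u ≤ c ^ 2 / 4 * (1 / β) := by
        have heq : c ^ 2 / 4 * (1 / β) = c ^ 2 / (4 * β) := by ring
        rw [heq, ← hsq, le_div_iff₀ (by positivity)]
        nlinarith [sq_nonneg (c - 2 * β * s)]
      linarith
  have : c ^ 2 / 4 * (c ^ 2 / (β - B) ^ 3 + 1 / β)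
      = c ^ 2 / 4 * (c ^ 2 / (β - B) ^ 3) + c ^ 2 / 4 * (1 / β) := by ring
  linarith
end

section
/- Let $(S,\mathcal{F},\mu)$ be a $\sigma$-finite measure space, $H$ a separable real Hilbert space, and $F, F_n \in L^2(S; H, \mu)$ with $F_n \rightharpoonup F$ weakly in $L^2(S;H,\mu)$. Then $|F(y)|_H \leq \limsup_{n\to\infty} |F_n(y)|_H$ for $\mu$-almost every $y \in S$. -/
open MeasureTheory Filter Set Topology
open scoped ENNReal NNReal RealInnerProductSpace

/-!
Testing the weak convergence against `1_B • v`, for `B` of finite measure, gives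
`∫_B ⟪F_n, v⟫ → ∫_B ⟪F, v⟫`. If `⟪F, v⟫ ≥ q` on `B` while `⟪F_n, v⟫ ≤ r < q` on `B` for all
large `n`, this forces `q μ(B) ≤ r μ(B)`, so `B` is null. Taking the countably many rational
`q, r`, thresholds `N`, and directions `v` in a countable norming subset of the unit ball, the
norm `‖F y‖ = sup_v ⟪F y, v⟫` is a.e. bounded by every eventual bound of `‖F_n y‖`.
-/

theorem exists_countable_norming_set (H : Type*) [NormedAddCommGroup H] [InnerProductSpace ℝ H]
    [TopologicalSpace.SeparableSpace H] :
    ∃ D : Set H, D.Countable ∧ D ⊆ Metric.closedBall 0 1 ∧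
      ∀ x : H, ∀ r : ℝ, (∀ u ∈ D, ⟪x, u⟫ ≤ r) → ‖x‖ ≤ r := by
  obtain ⟨D, hDball, hDc, hdense⟩ :=
    (TopologicalSpace.IsSeparable.of_separableSpace
      (Metric.closedBall (0 : H) 1)).exists_countable_dense_subset
  refine ⟨D, hDc, hDball, fun x r hr => ?_⟩
  by_contra! hlt
  -- `‖x‖⁻¹ • x` lies in the unit ball and `⟪x, ‖x‖⁻¹ • x⟫ = ‖x‖`, also when `x = 0`.
  have hx : ‖x‖⁻¹ • x ∈ Metric.closedBall (0 : H) 1 := by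
    rw [mem_closedBall_zero_iff, norm_smul, norm_inv, norm_norm]
    exact inv_mul_le_one_of_le₀ le_rfl (norm_nonneg x)
  have hxx : ⟪x, ‖x‖⁻¹ • x⟫ = ‖x‖ := by
    rw [real_inner_smul_right, real_inner_self_eq_norm_sq]
    rcases eq_or_ne ‖x‖ 0 with h | h
    · simp [h]
    · field_simp
  obtain ⟨u, hu, huD⟩ := mem_closure_iff.mp (hdense hx) {u | r < ⟪x, u⟫}
    (isOpen_lt continuous_const (continuous_const.inner continuous_id)) (by simpa [hxx] using hlt)
  exact (hr u huD).not_gt hu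

section FiniteMeasure

variable {S : Type*} [MeasurableSpace S] {ν : Measure S} [IsFiniteMeasure ν]

theorem measure_eq_zero_of_tendsto_setIntegral {f : ℕ → S → ℝ} {g : S → ℝ} {B : Set S}
    (hB : MeasurableSet B) (hf : ∀ n, Integrable (f n) ν) (hg : Integrable g ν)
    (hlim : Tendsto (fun n => ∫ y in B, f n y ∂ν) atTop (𝓝 (∫ y in B, g y ∂ν)))
    {r q : ℝ} (hrq : r < q) {N : ℕ} (hfB : ∀ n ≥ N, ∀ y ∈ B, f n y ≤ r)
    (hgB : ∀ y ∈ B, q ≤ g y) : ν B = 0 := by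
  have hupper : ∫ y in B, g y ∂ν ≤ ν.real B * r := by
    refine le_of_tendsto hlim (eventually_atTop.2 ⟨N, fun n hn => ?_⟩)
    rw [← smul_eq_mul, ← setIntegral_const]
    exact setIntegral_mono_on (hf n).integrableOn (integrableOn_const (measure_ne_top ν B)) hB
      (hfB n hn)
  have hlower := setIntegral_ge_of_const_le_real hB (measure_ne_top ν B) hgB hg.integrableOn
  have hreal : ν.real B = 0 := by nlinarith [measureReal_nonneg (μ := ν) (s := B)]
  exact (measureReal_eq_zero_iff (measure_ne_top ν B)).1 hreal

theorem ae_le_of_tendsto_setIntegral {f : ℕ → S → ℝ} {g : S → ℝ}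
    (hf : ∀ n, Integrable (f n) ν) (hg : Integrable g ν)
    (hlim : ∀ B, MeasurableSet B →
      Tendsto (fun n => ∫ y in B, f n y ∂ν) atTop (𝓝 (∫ y in B, g y ∂ν))) :
    ∀ᵐ y ∂ν, ∀ r : ℝ, (∀ᶠ n in atTop, f n y ≤ r) → g y ≤ r := by
  have hnull : ∀ (r q : ℚ) (N : ℕ), (r : ℝ) < q →
      ν ({y | (q : ℝ) ≤ g y} ∩ ⋂ n ≥ N, {y | f n y ≤ r}) = 0 := by
    intro r q N hrq
    have hB : NullMeasurableSet ({y | (q : ℝ) ≤ g y} ∩ ⋂ n ≥ N, {y | f n y ≤ r}) ν :=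
      (nullMeasurableSet_le aemeasurable_const hg.aemeasurable).inter <|
        .biInter (to_countable _) fun n _ =>
          nullMeasurableSet_le (hf n).aemeasurable aemeasurable_const
    obtain ⟨T, hTB, hT, hTae⟩ := hB.exists_measurable_subset_ae_eq
    rw [← measure_congr hTae]
    exact measure_eq_zero_of_tendsto_setIntegral hT hf hg (hlim T hT) hrq
      (fun n hn y hy => mem_iInter₂.1 (hTB hy).2 n hn) fun y hy => (hTB hy).1
  have hae : ∀ᵐ y ∂ν, ∀ (r q : ℚ) (N : ℕ), (r : ℝ) < q →
      y ∉ {y | (q : ℝ) ≤ g y} ∩ ⋂ n ≥ N, {y | f n y ≤ r} := by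
    simp only [ae_all_iff, eventually_imp_distrib_left]
    exact fun r q N hrq => measure_eq_zero_iff_ae_notMem.1 (hnull r q N hrq)
  filter_upwards [hae] with y hy r hr
  by_contra! hlt
  obtain ⟨r', hrr', hr'g⟩ := exists_rat_btwn hlt
  obtain ⟨q, hr'q, hqg⟩ := exists_rat_btwn hr'g
  obtain ⟨N, hN⟩ := eventually_atTop.1 hr
  exact hy r' q N hr'q ⟨hqg.le, mem_iInter₂.2 fun n hn => (hN n hn).trans hrr'.le⟩

theorem ae_norm_le_of_tendsto_setIntegral_inner {H : Type*} [NormedAddCommGroup H]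
    [InnerProductSpace ℝ H] [TopologicalSpace.SeparableSpace H] {F : S → H} {Fn : ℕ → S → H}
    (hF : Integrable F ν) (hFn : ∀ n, Integrable (Fn n) ν)
    (hlim : ∀ B, MeasurableSet B → ∀ v : H,
      Tendsto (fun n => ∫ y in B, ⟪Fn n y, v⟫ ∂ν) atTop (𝓝 (∫ y in B, ⟪F y, v⟫ ∂ν))) :
    ∀ᵐ y ∂ν, ∀ r : ℝ, (∀ᶠ n in atTop, ‖Fn n y‖ ≤ r) → ‖F y‖ ≤ r := by
  obtain ⟨D, hDc, hDball, hnorming⟩ := exists_countable_norming_set H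
  have hD : ∀ᵐ y ∂ν, ∀ u ∈ D, ∀ r : ℝ, (∀ᶠ n in atTop, ⟪Fn n y, u⟫ ≤ r) → ⟪F y, u⟫ ≤ r :=
    (ae_ball_iff hDc).2 fun u _ =>
      ae_le_of_tendsto_setIntegral (fun n => (hFn n).inner_const u) (hF.inner_const u)
        fun B hB => hlim B hB u
  filter_upwards [hD] with y hy r hr
  refine hnorming _ r fun u hu => hy u hu r (hr.mono fun n hn => ?_)
  calc ⟪Fn n y, u⟫ ≤ ‖Fn n y‖ * ‖u‖ := real_inner_le_norm _ _
    _ ≤ ‖Fn n y‖ :=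
      mul_le_of_le_one_right (norm_nonneg _) (mem_closedBall_zero_iff.1 (hDball hu))
    _ ≤ r := hn

end FiniteMeasure

theorem ENNReal.coe_le_limsup_of_forall_eventually_le {ι : Type*} {l : Filter ι} {a : ι → ℝ≥0}
    {b : ℝ≥0} (h : ∀ r : ℝ≥0, (∀ᶠ i in l, a i ≤ r) → b ≤ r) :
    (b : ℝ≥0∞) ≤ limsup (fun i => (a i : ℝ≥0∞)) l := by
  refine le_of_forall_gt_imp_ge_of_dense fun c hc => ?_
  induction c using ENNReal.recTopCoe with
  | top => exact le_top
  | coe r =>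
    exact ENNReal.coe_le_coe.2 <| h r <|
      (eventually_lt_of_limsup_lt hc).mono fun i hi => ENNReal.coe_le_coe.1 hi.le

theorem norm_le_limsup_of_weak_L2_conv_general
    {S : Type*} [MeasurableSpace S] (μ : Measure S) [SigmaFinite μ]
    {H : Type*} [NormedAddCommGroup H] [InnerProductSpace ℝ H]
    [SecondCountableTopology H]
    (F : S → H) (Fn : ℕ → S → H)
    (hF : MemLp F 2 μ) (hFn : ∀ n, MemLp (Fn n) 2 μ)
    (hweak : ∀ G : S → H, MemLp G 2 μ →
      Tendsto (fun n => ∫ y, ⟪Fn n y, G y⟫ ∂μ) atTop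
        (nhds (∫ y, ⟪F y, G y⟫ ∂μ))) :
    ∀ᵐ y ∂μ, (‖F y‖₊ : ℝ≥0∞) ≤ Filter.limsup (fun n => (‖Fn n y‖₊ : ℝ≥0∞)) atTop := by
  refine ae_of_forall_measure_lt_top_ae_restrict _ fun s hs hμs => ?_
  have : Fact (μ s < ∞) := ⟨hμs⟩
  have hint : ∀ G : S → H, MemLp G 2 μ → Integrable G (μ.restrict s) :=
    fun G hG => (hG.restrict s).integrable one_le_two
  have hlim : ∀ B, MeasurableSet B → ∀ v : H,
      Tendsto (fun n => ∫ y in B, ⟪Fn n y, v⟫ ∂μ.restrict s) atTop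
        (𝓝 (∫ y in B, ⟪F y, v⟫ ∂μ.restrict s)) := by
    intro B hB v
    have hG : MemLp ((B ∩ s).indicator fun _ => v) 2 μ :=
      memLp_indicator_const 2 (hB.inter hs) v
        (Or.inr (measure_inter_lt_top_of_right_ne_top hμs.ne).ne)
    have hinner : ∀ W : S → H, (fun y => ⟪W y, (B ∩ s).indicator (fun _ => v) y⟫) =
        (B ∩ s).indicator fun y => ⟪W y, v⟫ := fun W => by
      ext y; by_cases hy : y ∈ B ∩ s <;> simp [hy]
    simpa only [Measure.restrict_restrict hB, hinner, integral_indicator (hB.inter hs)]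
      using hweak _ hG
  filter_upwards [ae_norm_le_of_tendsto_setIntegral_inner (hint F hF) (fun n => hint _ (hFn n))
    hlim] with y hy
  exact ENNReal.coe_le_limsup_of_forall_eventually_le fun r => hy r

/-- If `F_n ⇀ F` weakly in `L²(S; H, μ)`, then `‖F(y)‖ ≤ limsup_n ‖F_n(y)‖`
for `μ`-almost every `y`. -/
theorem norm_le_limsup_of_weak_L2_conv
    {S : Type*} [MeasurableSpace S] (μ : Measure S) [SigmaFinite μ]
    {H : Type*} [NormedAddCommGroup H] [InnerProductSpace ℝ H] [CompleteSpace H]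
    [SecondCountableTopology H]
    (F : S → H) (Fn : ℕ → S → H)
    (hF : MemLp F 2 μ) (hFn : ∀ n, MemLp (Fn n) 2 μ)
    (hweak : ∀ G : S → H, MemLp G 2 μ →
      Tendsto (fun n => ∫ y, ⟪Fn n y, G y⟫ ∂μ) atTop
        (nhds (∫ y, ⟪F y, G y⟫ ∂μ))) :
    ∀ᵐ y ∂μ, (‖F y‖₊ : ℝ≥0∞) ≤ Filter.limsup (fun n => (‖Fn n y‖₊ : ℝ≥0∞)) atTop :=
  norm_le_limsup_of_weak_L2_conv_general μ F Fn hF hFn hweak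
end

section
/- Let $(S,\mathcal{F},\mu)$ be $\sigma$-finite, $H$ separable Hilbert, $\psi$ the bounded radial map built from $\psi_0(r)=r/(1+|r|)$, and $F, F_n: S \to H$ measurable with $F_n \to F$ $\psi$-pseudo-weakly. Then $|F|_H \leq \limsup_{n\to\infty} |F_n|_H$ $\mu$-almost everywhere. -/
open MeasureTheory Filter Set
open scoped ENNReal NNReal RealInnerProductSpace

/-!
If `‖F‖ > limsup ‖Fₙ‖` on a set of positive measure, then (by σ-finiteness and countability of
the rationals) there are a threshold `q`, an index `N` and a set `B` of positive finite measure on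
which `‖Fₙ‖ ≤ q` for all `n ≥ N` while `‖F‖ > q`. Since `‖ψ(h)‖ = ψ₀(‖h‖)` with `ψ₀` strictly
increasing, testing the weak convergence on `B` against `ψ(F)` gives
`∫_B ‖ψ(F)‖² = lim ∫_B ⟪ψ(Fₙ), ψ(F)⟫ ≤ ψ₀(q) ∫_B ‖ψ(F)‖`, which is impossible because
`‖ψ(F)‖ > ψ₀(q)` on `B`.
-/

/-- The bounded radial map `ψ(h) = h/(1+‖h‖)` built from `ψ₀(r) = r/(1+|r|)`. -/
noncomputable def psiMap {H : Type*} [NormedAddCommGroup H] [InnerProductSpace ℝ H]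
    (h : H) : H := (1 / (1 + ‖h‖)) • h

/-- `ψ`-pseudo-weak convergence: `ψ(Fₙ) ⇀ ψ(F)` weakly in `L²(S; H, 𝟙_A μ)` for every
measurable `A` of finite measure. -/
def PseudoWeakTendsto {S : Type*} [MeasurableSpace S] (μ : Measure S)
    {H : Type*} [NormedAddCommGroup H] [InnerProductSpace ℝ H] [CompleteSpace H]
    (Fn : ℕ → S → H) (F : S → H) : Prop :=
  ∀ A : Set S, MeasurableSet A → μ A < ∞ →
    ∀ G : S → H, MemLp G 2 (μ.restrict A) →
      Tendsto (fun n => ∫ y in A, ⟪psiMap (Fn n y), G y⟫ ∂μ) atTop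
        (nhds (∫ y in A, ⟪psiMap (F y), G y⟫ ∂μ))

section PsiMap

variable {H : Type*} [NormedAddCommGroup H] [InnerProductSpace ℝ H]

theorem strictMonoOn_div_one_add : StrictMonoOn (fun r : ℝ => r / (1 + r)) (Ici 0) := by
  intro a ha b hb hab
  rw [mem_Ici] at ha hb
  rw [div_lt_div_iff₀ (by linarith) (by linarith)]
  linarith

theorem norm_psiMap (h : H) : ‖psiMap h‖ = ‖h‖ / (1 + ‖h‖) := by
  rw [psiMap, norm_smul, Real.norm_of_nonneg (by positivity), one_div, inv_mul_eq_div]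

theorem norm_psiMap_le_iff {h : H} {r : ℝ} (hr : 0 ≤ r) :
    ‖psiMap h‖ ≤ r / (1 + r) ↔ ‖h‖ ≤ r := by
  rw [norm_psiMap]
  exact strictMonoOn_div_one_add.le_iff_le (norm_nonneg h) hr

theorem lt_norm_psiMap_iff {h : H} {r : ℝ} (hr : 0 ≤ r) :
    r / (1 + r) < ‖psiMap h‖ ↔ r < ‖h‖ := by
  simpa only [not_le] using (norm_psiMap_le_iff (h := h) hr).not

theorem norm_psiMap_le_one (h : H) : ‖psiMap h‖ ≤ 1 := by
  rw [norm_psiMap, div_le_one (by positivity)]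
  linarith

theorem continuous_psiMap : Continuous (psiMap : H → H) :=
  (continuous_const.div (continuous_const.add continuous_norm) fun h =>
    (add_pos_of_pos_of_nonneg one_pos (norm_nonneg h)).ne').smul continuous_id

end PsiMap

section Localization

variable {S : Type*} [MeasurableSpace S] {μ : Measure S} [SigmaFinite μ]
  {a : S → ℝ≥0∞} {b : ℕ → S → ℝ≥0∞}

theorem exists_measurableSet_lt_le_of_not_ae_le_limsup (ha : Measurable a)
    (hb : ∀ n, Measurable (b n)) (h : ¬ ∀ᵐ y ∂μ, a y ≤ limsup (fun n => b n y) atTop) :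
    ∃ (q : ℝ≥0) (N : ℕ) (B : Set S), MeasurableSet B ∧ μ B ≠ 0 ∧ μ B < ∞ ∧
      ∀ y ∈ B, (q : ℝ≥0∞) < a y ∧ ∀ n ≥ N, b n y ≤ q := by
  let T : ℚ → ℕ → ℕ → Set S := fun q N k =>
    {y | (Real.toNNReal q : ℝ≥0∞) < a y} ∩ (⋂ n ≥ N, {y | b n y ≤ Real.toNNReal q}) ∩
      spanningSets μ k
  have hcover : {y | ¬ a y ≤ limsup (fun n => b n y) atTop} ⊆ ⋃ (q) (N) (k), T q N k := by
    intro y hy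
    rw [mem_ofPred_eq, not_le] at hy
    obtain ⟨q, -, hlim_lt, hlt_a⟩ := ENNReal.lt_iff_exists_rat_btwn.1 hy
    obtain ⟨N, hN⟩ := eventually_atTop.1 (eventually_lt_of_limsup_lt hlim_lt)
    simp only [mem_iUnion]
    exact ⟨q, N, spanningSetsIndex μ y,
      ⟨hlt_a, mem_iInter₂.2 fun n hn => (hN n hn).le⟩, mem_spanningSetsIndex μ y⟩
  obtain ⟨q, N, k, hT⟩ : ∃ q N k, μ (T q N k) ≠ 0 := by
    by_contra! hnull
    exact h (ae_iff.2 (measure_mono_null hcover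
      (measure_iUnion_null fun q => measure_iUnion_null fun N => measure_iUnion_null (hnull q N))))
  refine ⟨Real.toNNReal q, N, T q N k, ?_, hT, ?_, fun y hy => ⟨hy.1.1, mem_iInter₂.1 hy.1.2⟩⟩
  · exact ((measurableSet_lt measurable_const ha).inter (.iInter fun n => .iInter fun _ =>
      measurableSet_le (hb n) measurable_const)).inter (measurableSet_spanningSets μ k)
  · exact (measure_mono inter_subset_right).trans_lt (measure_spanningSets_lt_top μ k)

theorem exists_measurableSet_ae_lt_le_of_not_ae_le_limsup (ha : AEMeasurable a μ)
    (hb : ∀ n, AEMeasurable (b n) μ) (h : ¬ ∀ᵐ y ∂μ, a y ≤ limsup (fun n => b n y) atTop) :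
    ∃ (q : ℝ≥0) (N : ℕ) (B : Set S), MeasurableSet B ∧ μ B ≠ 0 ∧ μ B < ∞ ∧
      ∀ᵐ y ∂μ.restrict B, (q : ℝ≥0∞) < a y ∧ ∀ n ≥ N, b n y ≤ q := by
  have hmk : ∀ᵐ y ∂μ, a y = ha.mk a y ∧ ∀ n, b n y = (hb n).mk (b n) y :=
    ha.ae_eq_mk.and (ae_all_iff.2 fun n => (hb n).ae_eq_mk)
  have h_mk : ¬ ∀ᵐ y ∂μ, ha.mk a y ≤ limsup (fun n => (hb n).mk (b n) y) atTop := by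
    refine fun h' => h ?_
    filter_upwards [h', hmk] with y hy ⟨ha_eq, hb_eq⟩
    simpa only [ha_eq, hb_eq] using hy
  obtain ⟨q, N, B, hB, hμB, hμB_lt, hqB⟩ := exists_measurableSet_lt_le_of_not_ae_le_limsup
    ha.measurable_mk (fun n => (hb n).measurable_mk) h_mk
  refine ⟨q, N, B, hB, hμB, hμB_lt, ?_⟩
  filter_upwards [ae_restrict_mem hB, ae_restrict_of_ae hmk] with y hy ⟨ha_eq, hb_eq⟩
  simpa only [ha_eq, hb_eq] using hqB y hy

end Localization

theorem not_tendsto_integral_inner_of_norm_le_lt_norm {S H : Type*} [MeasurableSpace S]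
    [NormedAddCommGroup H] [InnerProductSpace ℝ H] {ν : Measure S} [IsFiniteMeasure ν]
    (hν : ν ≠ 0) {u : ℕ → S → H} {v : S → H} {c : ℝ}
    (hu : ∀ n, AEStronglyMeasurable (u n) ν) (hv : MemLp v 2 ν)
    (hu_le : ∀ᶠ n in atTop, ∀ᵐ y ∂ν, ‖u n y‖ ≤ c) (hv_gt : ∀ᵐ y ∂ν, c < ‖v y‖) :
    ¬ Tendsto (fun n => ∫ y, ⟪u n y, v y⟫ ∂ν) atTop (nhds (∫ y, ⟪v y, v y⟫ ∂ν)) := by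
  intro hlim
  have := ae_neBot.2 hν
  obtain ⟨N, hN⟩ := eventually_atTop.1 hu_le
  have hc : 0 ≤ c := by
    obtain ⟨y, hy⟩ := (hN N le_rfl).exists
    exact (norm_nonneg _).trans hy
  have hcv : Integrable (fun y => c * ‖v y‖) ν := (hv.integrable one_le_two).norm.const_mul c
  have hvv : Integrable (fun y => ⟪v y, v y⟫) ν := by
    simpa only [real_inner_self_eq_norm_sq] using hv.norm.integrable_sq
  have hinner_le : ∀ n ≥ N, ∀ᵐ y ∂ν, ‖⟪u n y, v y⟫‖ ≤ c * ‖v y‖ := fun n hn => by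
    filter_upwards [hN n hn] with y hy
    exact (norm_inner_le_norm _ _).trans (mul_le_mul_of_nonneg_right hy (norm_nonneg _))
  have hupper : ∫ y, ⟪v y, v y⟫ ∂ν ≤ ∫ y, c * ‖v y‖ ∂ν := by
    refine le_of_tendsto hlim (eventually_atTop.2 ⟨N, fun n hn => ?_⟩)
    refine integral_mono_ae (hcv.mono' ((hu n).inner hv.1) (hinner_le n hn)) hcv ?_
    filter_upwards [hinner_le n hn] with y hy
    exact (le_abs_self _).trans hy
  have hlt : ∀ᵐ y ∂ν, c * ‖v y‖ < ⟪v y, v y⟫ := by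
    filter_upwards [hv_gt] with y hy
    rw [real_inner_self_eq_norm_sq]
    nlinarith
  have heq : (fun y => c * ‖v y‖) =ᵐ[ν] fun y => ⟪v y, v y⟫ :=
    (integral_eq_iff_of_ae_le hcv hvv (hlt.mono fun y hy => hy.le)).1
      (le_antisymm (integral_mono_ae hcv hvv (hlt.mono fun y hy => hy.le)) hupper)
  obtain ⟨y, hy_lt, hy_eq⟩ := (hlt.and heq).exists
  exact hy_lt.ne hy_eq

theorem norm_le_limsup_of_pseudoWeak_general
    {S : Type*} [MeasurableSpace S] (μ : Measure S) [SigmaFinite μ]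
    {H : Type*} [NormedAddCommGroup H] [InnerProductSpace ℝ H] [CompleteSpace H]
    (Fn : ℕ → S → H) (F : S → H)
    (hFn : ∀ n, AEStronglyMeasurable (Fn n) μ)
    (hF : AEStronglyMeasurable F μ)
    (hlim : PseudoWeakTendsto μ Fn F) :
    ∀ᵐ y ∂μ, (‖F y‖₊ : ℝ≥0∞) ≤ Filter.limsup (fun n => (‖Fn n y‖₊ : ℝ≥0∞)) atTop := by
  by_contra hbad
  obtain ⟨q, N, B, hB, hμB, hμB_lt, hqB⟩ := exists_measurableSet_ae_lt_le_of_not_ae_le_limsup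
    hF.enorm (fun n => (hFn n).enorm) hbad
  have : IsFiniteMeasure (μ.restrict B) := isFiniteMeasure_restrict.2 hμB_lt.ne
  have hψF : MemLp (fun y => psiMap (F y)) 2 (μ.restrict B) :=
    .of_bound (continuous_psiMap.comp_aestronglyMeasurable hF.restrict) 1
      (ae_of_all _ fun y => norm_psiMap_le_one _)
  refine not_tendsto_integral_inner_of_norm_le_lt_norm (c := q / (1 + q))
    (mt Measure.restrict_eq_zero.1 hμB)
    (fun n => continuous_psiMap.comp_aestronglyMeasurable (hFn n).restrict) hψF ?_ ?_
    (hlim B hB hμB_lt _ hψF)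
  · filter_upwards [eventually_ge_atTop N] with n hn
    filter_upwards [hqB] with y hy
    exact (norm_psiMap_le_iff q.2).2 (by exact_mod_cast hy.2 n hn)
  · filter_upwards [hqB] with y hy
    exact (lt_norm_psiMap_iff q.2).2 (by exact_mod_cast hy.1)

/-- If `Fₙ → F` `ψ`-pseudo-weakly, then `‖F‖ ≤ limsup_n ‖Fₙ‖` `μ`-a.e. -/
theorem norm_le_limsup_of_pseudoWeak
    {S : Type*} [MeasurableSpace S] (μ : Measure S) [SigmaFinite μ]
    {H : Type*} [NormedAddCommGroup H] [InnerProductSpace ℝ H] [CompleteSpace H]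
    [SecondCountableTopology H]
    (Fn : ℕ → S → H) (F : S → H)
    (hFn : ∀ n, AEStronglyMeasurable (Fn n) μ)
    (hF : AEStronglyMeasurable F μ)
    (hlim : PseudoWeakTendsto μ Fn F) :
    ∀ᵐ y ∂μ, (‖F y‖₊ : ℝ≥0∞) ≤ Filter.limsup (fun n => (‖Fn n y‖₊ : ℝ≥0∞)) atTop :=
  norm_le_limsup_of_pseudoWeak_general μ Fn F hFn hF hlim
end
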